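/- Let α = 1/2, let ℓ ≥ 1 be a natural number and let t > 0 satisfy t · λ_ℓ² > 1. Then σ²_{ℓ,t,1/2} ≤ λ_ℓ^{-2} · (1 + (Γ(3/2))² · log(λ_ℓ² t)). -/

import Mathlib

open scoped BigOperators
open MeasureTheory Real

/-- The two-parameter Mittag-Leffler function `E_{a,b}(x) = ∑_{k=0}^∞ x^k / Γ(a k + b)`. -/
noncomputable def mittagLeffler (a b x : ℝ) : ℝ :=
  ∑' k : ℕ, x ^ k / Real.Gamma (a * (k : ℝ) + b)

/-- Eigenvalues of the negative Laplace–Beltrami operator on the sphere: `λ_ℓ = ℓ(ℓ+1)`. -/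
noncomputable def lam (l : ℕ) : ℝ := (l : ℝ) * ((l : ℝ) + 1)

/-- `σ²_{ℓ,t,α} = ∫₀ᵗ (E_α(−λ_ℓ r^α))² dr`. -/
noncomputable def sigmaSq (l : ℕ) (t a : ℝ) : ℝ :=
  ∫ r in (0:ℝ)..t, (mittagLeffler a 1 (-(lam l) * r ^ a)) ^ 2

/-!
Expanding `exp (2xu)` in `∫₀^∞ e^{-u² + 2xu} du` and integrating term by term with
`∫₀^∞ uᵏ e^{-u²} du = Γ((k+1)/2)/2` and Legendre's duplication formula gives
`E_{1/2}(x) = (2/√π) ∫₀^∞ e^{-u² + 2xu} du`. Hence `E_{1/2}` is monotone, `E_{1/2}(0) = 1`,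
and dropping `-u²` gives `E_{1/2}(-x) ≤ (√π x)⁻¹` for `x > 0`. So the integrand of
`σ²_{ℓ,t,1/2}` is at most `1` on `[0, s]` and at most `(π λ² r)⁻¹` on `[s, t]`; take
`s = λ^{-2}` and use `1/π ≤ π/4 = Γ(3/2)²`.
-/

open Set Nat

lemma integrable_exp_neg_sq_add_mul (c : ℝ) : Integrable fun u : ℝ => exp (-u ^ 2 + c * u) := by
  have h := ((integrable_exp_neg_mul_sq one_pos).comp_sub_right (c / 2)).const_mul
    (exp (c ^ 2 / 4))
  refine h.congr (ae_of_all _ fun u => ?_)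
  simp only [← exp_add]
  ring_nf

lemma integral_pow_mul_exp_neg_sq_Ioi (k : ℕ) :
    ∫ u in Ioi (0 : ℝ), u ^ k * exp (-u ^ 2) = Gamma ((k + 1) / 2) / 2 := by
  have h := integral_rpow_mul_exp_neg_mul_rpow two_pos (by linarith [k.cast_nonneg (α := ℝ)] :
    (-1 : ℝ) < k) one_pos
  simp only [rpow_natCast, one_rpow, neg_one_mul, rpow_two] at h
  rw [h]
  ring

lemma Gamma_mul_Gamma_half_add_one (k : ℕ) :
    Gamma ((k + 1) / 2) * Gamma (k / 2 + 1) = k ! * 2 ^ (-(k : ℝ)) * √π := by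
  have h := Gamma_mul_Gamma_add_half ((k + 1) / 2)
  rwa [show ((k : ℝ) + 1) / 2 + 1 / 2 = k / 2 + 1 by ring,
    show 2 * (((k : ℝ) + 1) / 2) = k + 1 by ring, Gamma_nat_eq_factorial,
    show 1 - ((k : ℝ) + 1) = -k by ring] at h

lemma pow_div_factorial_mul_Gamma_half (x : ℝ) (k : ℕ) :
    (2 * x) ^ k / k ! * (Gamma ((k + 1) / 2) / 2) =
      √π / 2 * (x ^ k / Gamma (1 / 2 * k + 1)) := by
  have hΓ : Gamma (1 / 2 * k + 1) ≠ 0 := (Gamma_pos_of_pos (by positivity)).ne'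
  have h2 : (2 : ℝ) ^ k * 2 ^ (-(k : ℝ)) = 1 := by
    rw [← rpow_natCast, ← rpow_add two_pos, add_neg_cancel, rpow_zero]
  have hd := Gamma_mul_Gamma_half_add_one k
  rw [show (k : ℝ) / 2 + 1 = 1 / 2 * k + 1 by ring] at hd
  have hk : (k ! : ℝ) ≠ 0 := by positivity
  generalize Gamma (1 / 2 * k + 1) = g at *
  field_simp
  rw [mul_pow]
  linear_combination (2 ^ k * x ^ k) * hd + (k ! * x ^ k * √π) * h2

lemma hasSum_pow_div_factorial_exp (x : ℝ) : HasSum (fun n : ℕ => x ^ n / n !) (exp x) := by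
  rw [exp_eq_exp_ℝ]
  exact NormedSpace.expSeries_div_hasSum_exp x

lemma hasSum_mittagLeffler_half_integral (x : ℝ) :
    HasSum (fun k : ℕ => √π / 2 * (x ^ k / Gamma (1 / 2 * k + 1)))
      (∫ u in Ioi (0 : ℝ), exp (-u ^ 2 + 2 * x * u)) := by
  set F : ℕ → ℝ → ℝ := fun k u => (2 * x) ^ k / k ! * (u ^ k * exp (-u ^ 2))
  have hF : ∀ k, ∫ u in Ioi (0 : ℝ), F k u = √π / 2 * (x ^ k / Gamma (1 / 2 * k + 1)) := by
    intro k
    rw [integral_const_mul, integral_pow_mul_exp_neg_sq_Ioi, pow_div_factorial_mul_Gamma_half]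
  simp only [← hF]
  refine hasSum_integral_of_dominated_convergence
    (fun k u => (2 * |x| * u) ^ k / k ! * exp (-u ^ 2)) (fun k => ?_) (fun k => ?_)
    (ae_of_all _ fun u => (Real.summable_pow_div_factorial _).mul_right _) ?_
    (ae_of_all _ fun u => ?_)
  · fun_prop
  · filter_upwards [ae_restrict_mem measurableSet_Ioi] with u (hu : 0 < u)
    rw [norm_mul, norm_div, norm_mul, norm_pow, norm_pow, norm_mul, Real.norm_of_nonneg hu.le,
      Real.norm_of_nonneg (exp_pos _).le, Real.norm_two, RCLike.norm_natCast, Real.norm_eq_abs,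
      mul_pow, mul_pow]
    exact le_of_eq (by ring)
  · simp only [tsum_mul_right, (hasSum_pow_div_factorial_exp _).tsum_eq, ← exp_add]
    refine ((integrable_exp_neg_sq_add_mul (2 * |x|)).integrableOn).congr_fun (fun u _ => ?_)
      measurableSet_Ioi
    ring_nf
  · have h := (hasSum_pow_div_factorial_exp (2 * x * u)).mul_right (exp (-u ^ 2))
    rw [← exp_add, add_comm] at h
    have hFu : (fun k => F k u) = fun k => (2 * x * u) ^ k / k ! * exp (-u ^ 2) := by
      funext k
      simp only [F, mul_pow]
      ring
    rw [hFu]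
    exact h

theorem mittagLeffler_half_eq_integral (x : ℝ) :
    mittagLeffler (1 / 2) 1 x = 2 / √π * ∫ u in Ioi (0 : ℝ), exp (-u ^ 2 + 2 * x * u) := by
  have hπ : √π ≠ 0 := (sqrt_pos.2 pi_pos).ne'
  rw [← (hasSum_mittagLeffler_half_integral x).tsum_eq, tsum_mul_left, ← mul_assoc,
    div_mul_div_cancel₀ hπ, div_self two_ne_zero, one_mul, mittagLeffler]

theorem mittagLeffler_zero (a b : ℝ) : mittagLeffler a b 0 = (Gamma b)⁻¹ := by
  rw [mittagLeffler, tsum_eq_single 0 fun k hk => by simp [hk]]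
  simp

theorem mittagLeffler_half_monotone : Monotone (mittagLeffler (1 / 2) 1) := by
  intro x y hxy
  simp only [mittagLeffler_half_eq_integral]
  refine mul_le_mul_of_nonneg_left (setIntegral_mono_on
    (integrable_exp_neg_sq_add_mul _).integrableOn (integrable_exp_neg_sq_add_mul _).integrableOn
    measurableSet_Ioi fun u (hu : 0 < u) => ?_) (by positivity)
  gcongr

theorem mittagLeffler_half_nonneg (x : ℝ) : 0 ≤ mittagLeffler (1 / 2) 1 x := by
  rw [mittagLeffler_half_eq_integral]
  exact mul_nonneg (by positivity)
    (setIntegral_nonneg measurableSet_Ioi fun u _ => (exp_pos _).le)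

theorem mittagLeffler_half_le_one {x : ℝ} (hx : x ≤ 0) : mittagLeffler (1 / 2) 1 x ≤ 1 := by
  simpa [mittagLeffler_zero] using mittagLeffler_half_monotone hx

theorem mittagLeffler_half_neg_le {x : ℝ} (hx : 0 < x) :
    mittagLeffler (1 / 2) 1 (-x) ≤ (√π * x)⁻¹ := by
  have hint : ∫ u in Ioi (0 : ℝ), exp (-(2 * x) * u) = (2 * x)⁻¹ := by
    rw [integral_exp_mul_Ioi (by linarith), mul_zero, exp_zero, neg_div, ← div_neg, neg_neg,
      one_div]
  have hle : ∫ u in Ioi (0 : ℝ), exp (-u ^ 2 + 2 * -x * u) ≤ (2 * x)⁻¹ := by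
    rw [← hint]
    refine setIntegral_mono_on (integrable_exp_neg_sq_add_mul _).integrableOn
      (integrableOn_exp_mul_Ioi (by linarith) 0) measurableSet_Ioi fun u _ => ?_
    gcongr
    nlinarith [sq_nonneg u]
  rw [mittagLeffler_half_eq_integral]
  calc 2 / √π * _ ≤ 2 / √π * (2 * x)⁻¹ := by gcongr
    _ = (√π * x)⁻¹ := by field_simp

section

variable {c : ℝ}

lemma sq_mittagLeffler_half_le_one (hc : 0 ≤ c) {r : ℝ} (hr : 0 ≤ r) :
    mittagLeffler (1 / 2) 1 (-c * r ^ (1 / 2 : ℝ)) ^ 2 ≤ 1 :=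
  pow_le_one₀ (mittagLeffler_half_nonneg _) <| mittagLeffler_half_le_one <|
    mul_nonpos_of_nonpos_of_nonneg (neg_nonpos.2 hc) (rpow_nonneg hr _)

lemma sq_mittagLeffler_half_le_inv (hc : 0 < c) {r : ℝ} (hr : 0 < r) :
    mittagLeffler (1 / 2) 1 (-c * r ^ (1 / 2 : ℝ)) ^ 2 ≤ (π * c ^ 2)⁻¹ * r⁻¹ := by
  have h := pow_le_pow_left₀ (mittagLeffler_half_nonneg _)
    (mittagLeffler_half_neg_le (by positivity : 0 < c * r ^ (1 / 2 : ℝ))) 2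
  rw [neg_mul]
  refine h.trans_eq ?_
  rw [inv_pow, mul_pow, mul_pow, sq_sqrt pi_pos.le, ← sqrt_eq_rpow, sq_sqrt hr.le, mul_inv,
    mul_inv, mul_inv, mul_assoc]

lemma intervalIntegrable_sq_mittagLeffler_half (hc : 0 ≤ c) {a b : ℝ} (ha : 0 ≤ a)
    (hb : 0 ≤ b) :
    IntervalIntegrable (fun r => mittagLeffler (1 / 2) 1 (-c * r ^ (1 / 2 : ℝ)) ^ 2)
      volume a b := by
  have hmeas : Measurable fun r : ℝ => mittagLeffler (1 / 2) 1 (-c * r ^ (1 / 2 : ℝ)) ^ 2 :=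
    (mittagLeffler_half_monotone.measurable.comp (by fun_prop)).pow_const 2
  refine intervalIntegrable_const.mono_fun' (g := fun _ => (1 : ℝ)) hmeas.aestronglyMeasurable ?_
  filter_upwards [ae_restrict_mem measurableSet_uIoc] with r hr
  have hr0 : 0 ≤ r := (le_min ha hb).trans (uIoc_subset_uIcc hr).1
  rw [Real.norm_of_nonneg (sq_nonneg _)]
  exact sq_mittagLeffler_half_le_one hc hr0

end

lemma sigmaSq_half_le {l : ℕ} {s t : ℝ} (hl : 0 < lam l) (hs : 0 < s) (hst : s ≤ t) :
    sigmaSq l t (1 / 2) ≤ s + (π * lam l ^ 2)⁻¹ * log (t / s) := by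
  have hint := fun {a b : ℝ} => intervalIntegrable_sq_mittagLeffler_half hl.le (a := a) (b := b)
  rw [sigmaSq, ← intervalIntegral.integral_add_adjacent_intervals (hint le_rfl hs.le)
    (hint hs.le (hs.le.trans hst))]
  have h₁ : ∫ r in (0 : ℝ)..s, mittagLeffler (1 / 2) 1 (-lam l * r ^ (1 / 2 : ℝ)) ^ 2
      ≤ s := by
    simpa using intervalIntegral.integral_mono_on hs.le (hint le_rfl hs.le)
      intervalIntegrable_const fun r hr => sq_mittagLeffler_half_le_one hl.le hr.1
  have h₂ : ∫ r in s..t, mittagLeffler (1 / 2) 1 (-lam l * r ^ (1 / 2 : ℝ)) ^ 2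
      ≤ (π * lam l ^ 2)⁻¹ * log (t / s) := by
    have hpos : ∀ r ∈ uIcc s t, 0 < r := fun r hr => hs.trans_le (uIcc_of_le hst ▸ hr).1
    rw [← integral_inv_of_pos hs (hs.trans_le hst), ← intervalIntegral.integral_const_mul]
    exact intervalIntegral.integral_mono_on hst (hint hs.le (hs.le.trans hst))
      ((intervalIntegral.intervalIntegrable_inv (fun r hr => (hpos r hr).ne')
        continuousOn_id).const_mul _)
      fun r hr => sq_mittagLeffler_half_le_inv hl (hs.trans_le hr.1)
  linarith

theorem sigmaSq_bound_critical_alpha_general (l : ℕ) (t : ℝ)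
    (ht' : 1 < t * lam l ^ 2) :
    sigmaSq l t (1/2) ≤ lam l ^ (-2 : ℝ) *
      (1 + (Real.Gamma (3/2)) ^ 2 * Real.log (lam l ^ 2 * t)) := by
  have hl : 0 < lam l := by
    refine lt_of_le_of_ne (by unfold lam; positivity) fun h => ?_
    simp [← h] at ht'
    linarith
  have hst : (lam l ^ 2)⁻¹ ≤ t := by
    rw [inv_le_iff_one_le_mul₀ (by positivity)]
    exact ht'.le
  have hΓ : Gamma (3 / 2) ^ 2 = π / 4 := by
    rw [show (3 / 2 : ℝ) = 1 / 2 + 1 by norm_num, Gamma_add_one one_half_pos.ne',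
      Gamma_one_half_eq, mul_pow, sq_sqrt pi_pos.le]
    ring
  have hπ : π⁻¹ ≤ π / 4 := by
    rw [inv_le_iff_one_le_mul₀ pi_pos]
    nlinarith [pi_gt_three]
  have hlog : 0 ≤ log (lam l ^ 2 * t) := log_nonneg (by linarith)
  calc sigmaSq l t (1 / 2)
      ≤ (lam l ^ 2)⁻¹ + (π * lam l ^ 2)⁻¹ * log (t / (lam l ^ 2)⁻¹) :=
        sigmaSq_half_le hl (by positivity) hst
    _ = (lam l ^ 2)⁻¹ * (1 + π⁻¹ * log (lam l ^ 2 * t)) := by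
        rw [div_inv_eq_mul, mul_comm t, mul_inv]
        ring
    _ ≤ lam l ^ (-2 : ℝ) * (1 + Gamma (3 / 2) ^ 2 * log (lam l ^ 2 * t)) := by
        rw [rpow_neg hl.le, rpow_two, hΓ]
        gcongr

/-- For `α = 1/2`, `ℓ ≥ 1` and `t > 0` with `t λ_ℓ² > 1`:
`σ²_{ℓ,t,1/2} ≤ λ_ℓ^{-2} (1 + Γ(3/2)² log(λ_ℓ² t))`. -/
theorem sigmaSq_bound_critical_alpha (l : ℕ) (hl : 1 ≤ l) (t : ℝ) (ht : 0 < t)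
    (ht' : 1 < t * lam l ^ 2) :
    sigmaSq l t (1/2) ≤ lam l ^ (-2 : ℝ) *
      (1 + (Real.Gamma (3/2)) ^ 2 * Real.log (lam l ^ 2 * t)) :=
  sigmaSq_bound_critical_alpha_general l t ht'
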